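/- For the evil/odious partition of ℕ given by the Thue-Morse sequence, R_3^{(A)}(n) − R_3^{(B)}(n) = e_A(n) − e_B(n), where e_A(n) = 1 if n is even and t_{n/2} = 0 (else 0) and e_B(n) = 1 if n is even and t_{n/2} = 1 (else 0). In particular R_3^{(A)} and R_3^{(B)} differ at infinitely many n. -/

import Mathlib

def tm (n : ℕ) : ℕ :=
  if h : n = 0 then 0
  else if n % 2 = 0 then tm (n / 2) else 1 - tm (n / 2)
decreasing_by all_goals exact Nat.div_lt_self (Nat.pos_of_ne_zero h) one_lt_two

noncomputable def R3A (n : ℕ) : ℕ :=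
  Nat.card {p : ℕ × ℕ | tm p.1 = 0 ∧ tm p.2 = 0 ∧ p.1 ≤ p.2 ∧ p.1 + p.2 = n}

noncomputable def R3B (n : ℕ) : ℕ :=
  Nat.card {p : ℕ × ℕ | tm p.1 = 1 ∧ tm p.2 = 1 ∧ p.1 ≤ p.2 ∧ p.1 + p.2 = n}

/-!
With `s n = (-1) ^ tm n`, a two-colouring gives `[x, y ∈ A] - [x, y ∈ B] = (s x + s y) / 2`.
Summing over `x + y = n`, the ordered representation counts of `n` by `A` and by `B` therefore
differ by `∑_{x ≤ n} s x`, which is `s (n / 2)` for even `n` and `0` for odd `n`, since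
`s (2k) + s (2k + 1) = 0`; this is Dombi's theorem. Restricting to pairs `x ≤ y` halves an
ordered count once the diagonal term `[n / 2 ∈ S]` is added, and these diagonal terms
contribute `e_A n - e_B n`.
-/

open Finset

section Representations

variable (P : ℕ → Prop) [DecidablePred P]

theorem natCard_sumPairs_eq_card_filter (n : ℕ) :
    Nat.card {p : ℕ × ℕ | P p.1 ∧ P p.2 ∧ p.1 ≤ p.2 ∧ p.1 + p.2 = n} =
      #{x ∈ range (n / 2 + 1) | P x ∧ P (n - x)} := by
  have hset : {p : ℕ × ℕ | P p.1 ∧ P p.2 ∧ p.1 ≤ p.2 ∧ p.1 + p.2 = n} =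
      ({x ∈ range (n / 2 + 1) | P x ∧ P (n - x)}.image fun x => (x, n - x) : Finset _) := by
    ext ⟨x, y⟩
    simp only [Set.mem_ofPred_eq, coe_image, Set.mem_image, mem_coe, mem_filter, mem_range,
      Prod.mk.injEq]
    constructor
    · rintro ⟨hx, hy, hle, rfl⟩
      exact ⟨x, ⟨by omega, hx, by rwa [Nat.add_sub_cancel_left]⟩, rfl, by omega⟩
    · rintro ⟨x, ⟨hx, hPx, hPy⟩, rfl, rfl⟩
      exact ⟨hPx, hPy, by omega, by omega⟩
  rw [hset, Nat.card_coe_set_eq, Set.ncard_coe_finset,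
    card_image_of_injective _ fun a b h => congrArg Prod.fst h]

theorem sum_range_succ_add_ite_even {M : Type*} [AddCommMonoid M] (f : ℕ → M) (n : ℕ)
    (hf : ∀ x ≤ n, f (n - x) = f x) :
    ∑ x ∈ range (n + 1), f x + (if Even n then f (n / 2) else 0) =
      2 • ∑ x ∈ range (n / 2 + 1), f x := by
  have upper_half : ∀ k l, l + k = n + 1 →
      ∑ x ∈ range k, f (l + x) = ∑ x ∈ range k, f x := by
    intro k l hkl
    rw [← sum_range_reflect f k]
    refine sum_congr rfl fun x hx => ?_
    rw [mem_range] at hx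
    rw [← hf (k - 1 - x) (by omega)]
    congr 1
    omega
  obtain ⟨m, rfl | rfl⟩ := Nat.even_or_odd' n
  · rw [show 2 * m + 1 = m + 1 + m by ring, sum_range_add, upper_half m (m + 1) (by ring),
      if_pos (even_two_mul m), Nat.mul_div_cancel_left m two_pos, sum_range_succ _ m, two_nsmul]
    abel
  · rw [show 2 * m + 1 + 1 = m + 1 + (m + 1) by ring, sum_range_add,
      upper_half (m + 1) (m + 1) (by ring), if_neg (Nat.not_even_two_mul_add_one m),
      show (2 * m + 1) / 2 = m by omega, two_nsmul, add_zero]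

theorem two_mul_card_filter_range_half (n : ℕ) :
    2 * #{x ∈ range (n / 2 + 1) | P x ∧ P (n - x)} =
      #{x ∈ range (n + 1) | P x ∧ P (n - x)} + if Even n ∧ P (n / 2) then 1 else 0 := by
  have hsymm : ∀ x ≤ n, (if P (n - x) ∧ P (n - (n - x)) then 1 else 0) =
      if P x ∧ P (n - x) then 1 else 0 := by
    intro x hx
    simp only [Nat.sub_sub_self hx, and_comm]
  have hmid : (if Even n then if P (n / 2) ∧ P (n - n / 2) then 1 else 0 else 0) =
      if Even n ∧ P (n / 2) then 1 else 0 := by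
    by_cases hn : Even n
    · rw [show n - n / 2 = n / 2 by rcases hn with ⟨m, rfl⟩; omega]
      simp [hn]
    · simp [hn]
  rw [card_filter, card_filter, ← hmid, ← smul_eq_mul, ← sum_range_succ_add_ite_even _ n hsymm]

end Representations

theorem tm_two_mul (m : ℕ) : tm (2 * m) = tm m := by
  rcases Nat.eq_zero_or_pos m with rfl | hm
  · rfl
  · rw [tm, dif_neg (by omega), if_pos (by omega), Nat.mul_div_cancel_left m two_pos]

theorem tm_two_mul_add_one (m : ℕ) : tm (2 * m + 1) = 1 - tm m := by
  rw [tm, dif_neg (by omega), if_neg (by omega), show (2 * m + 1) / 2 = m by omega]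

theorem tm_le_one (n : ℕ) : tm n ≤ 1 := by
  induction n using Nat.evenOddRec with
  | h0 => rw [tm, dif_pos rfl]; omega
  | h_even m _ => rwa [tm_two_mul]
  | h_odd m _ => rw [tm_two_mul_add_one]; omega

theorem tm_eq_zero_or_eq_one (n : ℕ) : tm n = 0 ∨ tm n = 1 := by
  have := tm_le_one n
  omega

def tmSign (n : ℕ) : ℤ := (-1) ^ tm n

theorem tmSign_two_mul (m : ℕ) : tmSign (2 * m) = tmSign m := by
  rw [tmSign, tmSign, tm_two_mul]

theorem tmSign_two_mul_add_one (m : ℕ) : tmSign (2 * m + 1) = -tmSign m := by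
  rcases tm_eq_zero_or_eq_one m with h | h <;> simp [tmSign, tm_two_mul_add_one, h]

theorem sum_range_two_mul_tmSign (m : ℕ) : ∑ x ∈ range (2 * m), tmSign x = 0 := by
  induction m with
  | zero => rfl
  | succ m ih =>
    rw [mul_add_one, sum_range_succ, sum_range_succ, ih, tmSign_two_mul_add_one, tmSign_two_mul]
    ring

theorem sum_range_succ_tmSign (n : ℕ) :
    ∑ x ∈ range (n + 1), tmSign x = if Even n then tmSign (n / 2) else 0 := by
  obtain ⟨m, rfl | rfl⟩ := Nat.even_or_odd' n
  · rw [sum_range_succ, sum_range_two_mul_tmSign, zero_add, tmSign_two_mul,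
      if_pos (even_two_mul m), Nat.mul_div_cancel_left m two_pos]
  · rw [show 2 * m + 1 + 1 = 2 * (m + 1) by ring, sum_range_two_mul_tmSign,
      if_neg (Nat.not_even_two_mul_add_one m)]

theorem two_mul_ite_evil_sub_ite_odious (x y : ℕ) :
    2 * ((if tm x = 0 ∧ tm y = 0 then 1 else 0) - (if tm x = 1 ∧ tm y = 1 then 1 else 0) : ℤ) =
      tmSign x + tmSign y := by
  rcases tm_eq_zero_or_eq_one x with hx | hx <;> rcases tm_eq_zero_or_eq_one y with hy | hy <;>
    simp [tmSign, hx, hy]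

/-- Dombi's theorem, counting ordered representations. -/
theorem card_evil_sub_card_odious (n : ℕ) :
    (#{x ∈ range (n + 1) | tm x = 0 ∧ tm (n - x) = 0} : ℤ) -
        #{x ∈ range (n + 1) | tm x = 1 ∧ tm (n - x) = 1} =
      if Even n then tmSign (n / 2) else 0 := by
  have hreflect : ∑ x ∈ range (n + 1), tmSign (n - x) = ∑ x ∈ range (n + 1), tmSign x := by
    simpa using sum_range_reflect tmSign (n + 1)
  rw [← sum_range_succ_tmSign]
  refine (mul_right_inj' two_ne_zero).mp ?_
  calc 2 * ((#{x ∈ range (n + 1) | tm x = 0 ∧ tm (n - x) = 0} : ℤ) -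
          #{x ∈ range (n + 1) | tm x = 1 ∧ tm (n - x) = 1})
      = ∑ x ∈ range (n + 1), 2 * ((if tm x = 0 ∧ tm (n - x) = 0 then 1 else 0) -
          (if tm x = 1 ∧ tm (n - x) = 1 then 1 else 0) : ℤ) := by
        simp only [card_filter, Nat.cast_sum, Nat.cast_ite, Nat.cast_one, Nat.cast_zero,
          ← sum_sub_distrib, mul_sum]
    _ = ∑ x ∈ range (n + 1), (tmSign x + tmSign (n - x)) := by
        simp only [two_mul_ite_evil_sub_ite_odious]
    _ = 2 * ∑ x ∈ range (n + 1), tmSign x := by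
        rw [sum_add_distrib, hreflect, two_mul]

theorem ite_and_evil_sub_ite_and_odious (p : Prop) [Decidable p] (k : ℕ) :
    ((if p ∧ tm k = 0 then 1 else 0) - (if p ∧ tm k = 1 then 1 else 0) : ℤ) =
      if p then tmSign k else 0 := by
  by_cases hp : p
  · rcases tm_eq_zero_or_eq_one k with h | h <;> simp [hp, h, tmSign]
  · simp [hp]

theorem R3A_sub_R3B (n : ℕ) :
    (R3A n : ℤ) - R3B n =
      (if Even n ∧ tm (n / 2) = 0 then 1 else 0) - (if Even n ∧ tm (n / 2) = 1 then 1 else 0) := by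
  have hA : 2 * (R3A n : ℤ) = #{x ∈ range (n + 1) | tm x = 0 ∧ tm (n - x) = 0} +
      if Even n ∧ tm (n / 2) = 0 then 1 else 0 := by
    rw [R3A, natCard_sumPairs_eq_card_filter (fun x => tm x = 0)]
    exact_mod_cast two_mul_card_filter_range_half (fun x => tm x = 0) n
  have hB : 2 * (R3B n : ℤ) = #{x ∈ range (n + 1) | tm x = 1 ∧ tm (n - x) = 1} +
      if Even n ∧ tm (n / 2) = 1 then 1 else 0 := by
    rw [R3B, natCard_sumPairs_eq_card_filter (fun x => tm x = 1)]
    exact_mod_cast two_mul_card_filter_range_half (fun x => tm x = 1) n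
  linarith [card_evil_sub_card_odious n, ite_and_evil_sub_ite_and_odious (Even n) (n / 2)]

theorem r3_evil_odious_difference :
    (∀ n : ℕ, (R3A n : ℤ) - (R3B n : ℤ) =
      (if Even n ∧ tm (n / 2) = 0 then 1 else 0) -
      (if Even n ∧ tm (n / 2) = 1 then 1 else 0)) ∧
    {n : ℕ | R3A n ≠ R3B n}.Infinite := by
  refine ⟨R3A_sub_R3B, ?_⟩
  refine Set.infinite_of_injective_forall_mem (mul_right_injective₀ two_ne_zero) fun m h => ?_
  have hdiff := R3A_sub_R3B (2 * m)
  rw [h, sub_self, ite_and_evil_sub_ite_and_odious, if_pos (even_two_mul m),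
    Nat.mul_div_cancel_left m two_pos, tmSign] at hdiff
  exact pow_ne_zero _ (by norm_num) hdiff.symm
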